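/- Let n ≥ 1, μ > 0, σ > 0, and set γ = μσ. Let M be a symmetric n×n real matrix with orthogonal eigendecomposition M = P·Diag(d)·Pᵀ (P orthogonal, d ∈ ℝ^n), and define Z* = (P·Diag(φ_γ(d₁),…,φ_γ(d_n))·Pᵀ − M)/σ. Then Z* is symmetric positive definite and is the unique minimizer of Z ↦ (σ/2)‖Z + M/σ‖_F² − μ log det Z over the set of symmetric positive definite n×n matrices; that is, the Z-update of the sGS-ADMM satisfies Z* = (φ_γ^+(M) − M)/σ = φ_μσ^+(−M/σ). -/

import Mathlib

/-!
The objective `f(Z) = (σ/2)‖Z + M/σ‖² − μ log det Z` is strictly convex on positive definite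
matrices, and `Z* = P Diag(z) Pᵀ` with `z = (φ_γ(d) − d)/σ > 0` satisfies the first-order
condition `σ (Z* + M/σ) = μ Z*⁻¹`, because `φ_γ(t) (φ_γ(t) − t) = γ`. Expanding the square
around `Z*` and using this condition gives
`f(Z) − f(Z*) = (σ/2)‖Z − Z*‖² + μ (log det Z* − log det Z + tr(Z*⁻¹ Z) − n)`,
and the bracket is nonnegative by `log x ≤ x − 1` applied to the eigenvalues of
`Z*^{-1/2} Z Z*^{-1/2}`.
-/

open Matrix

/-- The scalar function `φ_γ(t) = (√(t² + 4γ) + t)/2`. -/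
noncomputable def phiMu (γ t : ℝ) : ℝ := (Real.sqrt (t ^ 2 + 4 * γ) + t) / 2

namespace Matrix

variable {ι : Type*} [Fintype ι] [DecidableEq ι]

theorem PosDef.log_det_le_trace_sub_card {X : Matrix ι ι ℝ} (hX : X.PosDef) :
    Real.log X.det ≤ X.trace - Fintype.card ι := by
  rw [hX.1.det_eq_prod_eigenvalues, hX.1.trace_eq_sum_eigenvalues]
  simp only [RCLike.ofReal_real_eq_id, id]
  calc Real.log (∏ i, hX.1.eigenvalues i) = ∑ i, Real.log (hX.1.eigenvalues i) :=
        Real.log_prod fun i _ => (hX.eigenvalues_pos i).ne'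
    _ ≤ ∑ i, (hX.1.eigenvalues i - 1) :=
        Finset.sum_le_sum fun i _ => Real.log_le_sub_one_of_pos (hX.eigenvalues_pos i)
    _ = ∑ i, hX.1.eigenvalues i - Fintype.card ι := by simp [Finset.sum_sub_distrib]

open scoped MatrixOrder in
theorem PosDef.log_det_le_log_det_add_trace_inv_mul {A B : Matrix ι ι ℝ} (hA : A.PosDef)
    (hB : B.PosDef) :
    Real.log B.det ≤ Real.log A.det + (A⁻¹ * B).trace - Fintype.card ι := by
  set S := CFC.sqrt A⁻¹
  have hS : S.PosDef := (hA.inv.isStrictlyPositive.sqrt).posDef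
  have hSS : S * S = A⁻¹ := CFC.sqrt_mul_sqrt_self _ hA.inv.posSemidef.nonneg
  have hX : (S * B * S).PosDef := by
    simpa only [hS.1.eq] using
      hB.conjTranspose_mul_mul_same (mulVec_injective_iff_isUnit.mpr hS.isUnit)
  have hdet : (S * B * S).det = (A.det)⁻¹ * B.det := by
    rw [det_mul, det_mul, mul_right_comm, ← det_mul, hSS, det_nonsing_inv, Ring.inverse_eq_inv']
  have htr : (S * B * S).trace = (A⁻¹ * B).trace := by
    rw [trace_mul_comm, ← Matrix.mul_assoc, hSS]
  have := hX.log_det_le_trace_sub_card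
  rw [hdet, htr, Real.log_mul (inv_ne_zero hA.det_pos.ne') hB.det_pos.ne', Real.log_inv] at this
  linarith

theorem sum_sum_mul_eq_trace_mul_transpose {m n R : Type*} [Fintype m] [Fintype n]
    [NonUnitalNonAssocSemiring R] (A B : Matrix m n R) : ∑ i, ∑ j, A i j * B i j = (A * Bᵀ).trace := by
  simp [trace, mul_apply]

theorem sum_sum_sq_pos_of_ne_zero {m n R : Type*} [Fintype m] [Fintype n] [Ring R]
    [LinearOrder R] [IsStrictOrderedRing R] {A : Matrix m n R} (hA : A ≠ 0) : 0 < ∑ i, ∑ j, A i j ^ 2 := by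
  obtain ⟨i, j, hij⟩ : ∃ i j, A i j ≠ 0 := by
    by_contra! h
    exact hA (Matrix.ext h)
  refine Finset.sum_pos' (fun _ _ => by positivity) ⟨i, Finset.mem_univ _, ?_⟩
  exact Finset.sum_pos' (fun _ _ => by positivity) ⟨j, Finset.mem_univ _, by positivity⟩

theorem sum_sq_sub_log_det_lt_of_stationary {σ μ : ℝ} (hσ : 0 < σ) (hμ : 0 ≤ μ)
    {C Zs Z : Matrix ι ι ℝ} (hZs : Zs.PosDef) (hZ : Z.PosDef) (hne : Z ≠ Zs)
    (hstat : σ • (Zs + C) = μ • Zs⁻¹) :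
    σ / 2 * ∑ i, ∑ j, (Zs i j + C i j) ^ 2 - μ * Real.log Zs.det
      < σ / 2 * ∑ i, ∑ j, (Z i j + C i j) ^ 2 - μ * Real.log Z.det := by
  set D := Z - Zs
  have hD : D.IsSymm :=
    (isHermitian_iff_isSymm.mp hZ.1).sub (isHermitian_iff_isSymm.mp hZs.1)
  have hexpand : ∑ i, ∑ j, (Z i j + C i j) ^ 2
      = ∑ i, ∑ j, (Zs i j + C i j) ^ 2 + ∑ i, ∑ j, D i j ^ 2 + 2 * ((Zs + C) * D).trace := by
    have htrace : ((Zs + C) * D).trace = ∑ i, ∑ j, (Zs + C) i j * D i j := by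
      rw [sum_sum_mul_eq_trace_mul_transpose, hD.eq]
    rw [htrace]
    simp only [Finset.mul_sum, ← Finset.sum_add_distrib]
    congr! 2 with i _ j _
    simp only [D, sub_apply, add_apply]
    ring
  have hlinear : σ * ((Zs + C) * D).trace = μ * ((Zs⁻¹ * Z).trace - Fintype.card ι) := by
    rw [← smul_eq_mul, ← trace_smul, ← smul_mul, hstat, smul_mul, trace_smul, smul_eq_mul,
      mul_sub, trace_sub, nonsing_inv_mul _ hZs.det_pos.ne'.isUnit, trace_one]
  have hlog := mul_le_mul_of_nonneg_left (hZs.log_det_le_log_det_add_trace_inv_mul hZ) hμ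
  have hquad := mul_pos hσ (sum_sum_sq_pos_of_ne_zero (sub_ne_zero.mpr hne))
  rw [hexpand]
  linarith

section Orthogonal

variable {P : Matrix ι ι ℝ} (hP : Pᵀ * P = 1)
include hP

theorem mul_diagonal_mul_transpose_mul_self (a b : ι → ℝ) :
    (P * diagonal a * Pᵀ) * (P * diagonal b * Pᵀ) = P * diagonal (a * b) * Pᵀ := by
  simp only [Matrix.mul_assoc]
  rw [← Matrix.mul_assoc Pᵀ, hP, Matrix.one_mul, ← Matrix.mul_assoc (diagonal a),
    diagonal_mul_diagonal]
  rfl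

theorem inv_mul_diagonal_mul_transpose {a : ι → ℝ} (ha : ∀ i, a i ≠ 0) :
    (P * diagonal a * Pᵀ)⁻¹ = P * diagonal a⁻¹ * Pᵀ := by
  refine inv_eq_left_inv ?_
  have hinv : a⁻¹ * a = fun _ => 1 := funext fun i => inv_mul_cancel₀ (ha i)
  rw [mul_diagonal_mul_transpose_mul_self hP, hinv, diagonal_one, Matrix.mul_one,
    mul_eq_one_comm.mp hP]

theorem posDef_mul_diagonal_mul_transpose {a : ι → ℝ} (ha : ∀ i, 0 < a i) :
    (P * diagonal a * Pᵀ).PosDef := by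
  have hPunit : IsUnit P := ⟨⟨P, Pᵀ, mul_eq_one_comm.mp hP, hP⟩, rfl⟩
  simpa using (posDef_diagonal_iff.mpr ha).mul_mul_conjTranspose_same
    (vecMul_injective_iff_isUnit.mpr hPunit)

end Orthogonal

end Matrix

theorem phiMu_sub_self_pos {γ : ℝ} (hγ : 0 < γ) (t : ℝ) : 0 < phiMu γ t - t := by
  have : t < Real.sqrt (t ^ 2 + 4 * γ) := Real.lt_sqrt_of_sq_lt (by linarith)
  unfold phiMu
  linarith

theorem phiMu_mul_sub_self {γ : ℝ} (hγ : 0 ≤ γ) (t : ℝ) : phiMu γ t * (phiMu γ t - t) = γ := by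
  have := Real.sq_sqrt (show 0 ≤ t ^ 2 + 4 * γ by positivity)
  unfold phiMu
  linear_combination this / 4

theorem div_phiMu_sub_self {γ : ℝ} (hγ : 0 < γ) (t : ℝ) : γ / (phiMu γ t - t) = phiMu γ t := by
  rw [div_eq_iff (phiMu_sub_self_pos hγ t).ne', phiMu_mul_sub_self hγ.le]

theorem sgs_admm_Z_update_general (n : ℕ) (μ σ : ℝ) (hμ : 0 < μ) (hσ : 0 < σ)
    (γ : ℝ) (hγ : γ = μ * σ)
    (M : Matrix (Fin n) (Fin n) ℝ)
    (P : Matrix (Fin n) (Fin n) ℝ) (hP : Pᵀ * P = 1) (d : Fin n → ℝ)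
    (hMd : M = P * Matrix.diagonal d * Pᵀ)
    (Zstar : Matrix (Fin n) (Fin n) ℝ)
    (hZstar : Zstar = σ⁻¹ • (P * Matrix.diagonal (fun i => phiMu γ (d i)) * Pᵀ - M)) :
    Zstar.PosDef ∧
      ∀ Z : Matrix (Fin n) (Fin n) ℝ, Z.PosDef → Z ≠ Zstar →
        (σ / 2) * ∑ i : Fin n, ∑ j : Fin n, (Zstar i j + σ⁻¹ * M i j) ^ 2
            - μ * Real.log Zstar.det
          < (σ / 2) * ∑ i : Fin n, ∑ j : Fin n, (Z i j + σ⁻¹ * M i j) ^ 2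
            - μ * Real.log Z.det := by
  have hγ_pos : 0 < γ := hγ ▸ mul_pos hμ hσ
  set φ : Fin n → ℝ := fun i => phiMu γ (d i)
  set z : Fin n → ℝ := σ⁻¹ • (φ - d)
  have hz : ∀ i, 0 < z i := fun i => mul_pos (inv_pos.mpr hσ) (phiMu_sub_self_pos hγ_pos (d i))
  have hZstar_eq : Zstar = P * diagonal z * Pᵀ := by
    rw [hZstar, hMd, ← sub_mul, ← mul_sub, diagonal_sub, ← smul_mul_assoc, ← mul_smul_comm,
      ← diagonal_smul]
    rfl
  have hZstar_pos : Zstar.PosDef := hZstar_eq ▸ posDef_mul_diagonal_mul_transpose hP hz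
  have hstat : σ • (Zstar + σ⁻¹ • M) = μ • Zstar⁻¹ := by
    have hμz : μ • z⁻¹ = φ := funext fun i => by
      simp only [z, Pi.smul_apply, Pi.inv_apply, Pi.sub_apply, smul_eq_mul]
      rw [mul_inv, inv_inv, ← mul_assoc, ← hγ, ← div_eq_mul_inv, div_phiMu_sub_self hγ_pos]
    calc σ • (Zstar + σ⁻¹ • M) = P * diagonal φ * Pᵀ := by
          rw [hZstar, smul_add, smul_smul, smul_smul, mul_inv_cancel₀ hσ.ne', one_smul, one_smul,
            sub_add_cancel]
      _ = μ • Zstar⁻¹ := by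
          rw [hZstar_eq, inv_mul_diagonal_mul_transpose hP fun i => (hz i).ne',
            ← smul_mul_assoc, ← mul_smul_comm, ← diagonal_smul, hμz]
  exact ⟨hZstar_pos, fun Z hZ hne =>
    sum_sq_sub_log_det_lt_of_stationary hσ hμ.le hZstar_pos hZ hne hstat⟩

/-- the `Z`-update of the sGS-ADMM.  For `μ, σ > 0`, `γ = μσ`, and a
symmetric `M = P Diag(d) Pᵀ` with `P` orthogonal, the matrix
`Z* = (P Diag(φ_γ(d)) Pᵀ − M)/σ = (φ_γ^+(M) − M)/σ` is symmetric positive definite and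
is the unique minimizer of `Z ↦ (σ/2)‖Z + M/σ‖_F² − μ log det Z` over symmetric positive
definite matrices. -/
theorem sgs_admm_Z_update (n : ℕ) (hn : 1 ≤ n) (μ σ : ℝ) (hμ : 0 < μ) (hσ : 0 < σ)
    (γ : ℝ) (hγ : γ = μ * σ)
    (M : Matrix (Fin n) (Fin n) ℝ) (hM : M.IsSymm)
    (P : Matrix (Fin n) (Fin n) ℝ) (hP : Pᵀ * P = 1) (d : Fin n → ℝ)
    (hMd : M = P * Matrix.diagonal d * Pᵀ)
    (Zstar : Matrix (Fin n) (Fin n) ℝ)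
    (hZstar : Zstar = σ⁻¹ • (P * Matrix.diagonal (fun i => phiMu γ (d i)) * Pᵀ - M)) :
    Zstar.PosDef ∧
      ∀ Z : Matrix (Fin n) (Fin n) ℝ, Z.PosDef → Z ≠ Zstar →
        (σ / 2) * ∑ i : Fin n, ∑ j : Fin n, (Zstar i j + σ⁻¹ * M i j) ^ 2
            - μ * Real.log Zstar.det
          < (σ / 2) * ∑ i : Fin n, ∑ j : Fin n, (Z i j + σ⁻¹ * M i j) ^ 2
            - μ * Real.log Z.det :=
  sgs_admm_Z_update_general n μ σ hμ hσ γ hγ M P hP d hMd Zstar hZstar
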